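/- Let X and Y be independent finitely supported random variables on G = 𝔽₂ⁿ and let W ⊆ V be subspaces of G. Then H[Y | π_W(Y)] ≥ s[X | π_V(X); Y | π_V(Y)] − H[π_W(X) | π_V(X)]. -/
import Mathlib


open Real Pointwise

noncomputable section

abbrev Fvec (n : ℕ) : Type := Fin n → ZMod 2

/-- Shannon entropy (natural log) of a finitely supported distribution. -/
def ent {A : Type*} (p : A → ℝ) : ℝ := ∑ᶠ a, Real.negMulLog (p a)

/-- `p` is a (finitely supported) probability distribution. -/
def IsDist {A : Type*} (p : A → ℝ) : Prop := (∀ a, 0 ≤ p a) ∧ ∑ᶠ a, p a = 1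

/-- Pushforward of a distribution along a map: the distribution of `f(X)` for `X ∼ p`. -/
def push {A B : Type*} (f : A → B) (p : A → ℝ) : B → ℝ := fun b => ∑ᶠ a ∈ f ⁻¹' {b}, p a

/-- Joint distribution of a pair of independent random variables. -/
def prodDist {A B : Type*} (p : A → ℝ) (q : B → ℝ) : A × B → ℝ := fun z => p z.1 * q z.2

/-- Distribution of `X + Y` for independent `X ∼ p`, `Y ∼ q`. -/
def conv {A : Type*} [AddGroup A] (p q : A → ℝ) : A → ℝ := fun z => ∑ᶠ x, p x * q (z - x)

/-- The distribution of `X` conditioned on `U = b`, where `r` is the joint distribution of `(X, U)`. -/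
def fiber {A B : Type*} (r : A × B → ℝ) (b : B) : A → ℝ := fun a => r (a, b) / push Prod.snd r b

/-- Conditional entropy `H[X | U]` of a joint distribution `r` of `(X, U)`. -/
def condEnt {A B : Type*} (r : A × B → ℝ) : ℝ := ∑ᶠ b, push Prod.snd r b * ent (fiber r b)

/-- Doubling mass `s[X ; Y]` (of independent copies with distributions `p`, `q`). -/
def sDouble {A : Type*} [AddGroup A] (p q : A → ℝ) : ℝ := ent p + ent q - ent (conv p q)

/-- Conditional doubling mass `s[X | U ; Y | W] = 𝔼_{u ∼ U, w ∼ W} s[X_u ; Y_w]`,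
where `r1`, `r2` are the joint distributions of `(X, U)` and `(Y, W)`. -/
def sCond {A U W : Type*} [AddGroup A] (r1 : A × U → ℝ) (r2 : A × W → ℝ) : ℝ :=
  ∑ᶠ u, ∑ᶠ w, push Prod.snd r1 u * push Prod.snd r2 w * sDouble (fiber r1 u) (fiber r2 w)

/-- Conditional mutual information `I[A : B | S]` of a joint distribution of `(A, B, S)`. -/
def condMI {A B S : Type*} (r : A × B × S → ℝ) : ℝ :=
  ent (push (fun z => (z.1, z.2.2)) r) + ent (push (fun z => z.2) r)
    - ent r - ent (push (fun z => z.2.2) r)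

/-- Uniform distribution on a set. -/
def unifOn {A : Type*} (s : Set A) : A → ℝ := s.indicator fun _ => (Nat.card s : ℝ)⁻¹

/-- Entropic Ruzsa distance `d[X ; Y]`. -/
def dRuzsa {A : Type*} [AddGroup A] (p q : A → ℝ) : ℝ := ent (conv p q) - ent p / 2 - ent q / 2

/-- Joint distribution of `(X, X + Y)` for independent `X ∼ p`, `Y ∼ q`. -/
def jointSum {A : Type*} [AddGroup A] (p q : A → ℝ) : A × A → ℝ :=
  push (fun z : A × A => (z.1, z.1 + z.2)) (prodDist p q)

/-- Joint distribution of `(X, π_V(X))`. -/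
def selfProj {n : ℕ} (V : Submodule (ZMod 2) (Fvec n)) (p : Fvec n → ℝ) :
    Fvec n × (Fvec n ⧸ V) → ℝ := push (fun x => (x, V.mkQ x)) p

/-- Joint distribution of independent `(X₁, X₂, Y₁, Y₂)` with `X₁, X₂ ∼ p` and `Y₁, Y₂ ∼ q`. -/
def quad {A : Type*} (p q : A → ℝ) : A × A × A × A → ℝ :=
  fun z => p z.1 * p z.2.1 * q z.2.2.1 * q z.2.2.2

/-- Distribution of `X₁ + ⋯ + X_k` for independent `Xᵢ ∼ p i`. -/
def indepSum {A : Type*} [AddCommGroup A] (k : ℕ) (p : Fin k → A → ℝ) : A → ℝ :=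
  push (fun x : Fin k → A => ∑ i, x i) (fun x => ∏ i, p i (x i))

/-- Statement `A(η, L, c)` from the paper. -/
def StA (η L c : ℝ) : Prop :=
  ∀ (n : ℕ) (p q : Fvec n → ℝ), IsDist p → IsDist q →
    ent (conv p q) ≤ (1 - η) * (ent p + ent q) →
    ∃ V : Submodule (ZMod 2) (Fvec n),
      ent (unifOn (V : Set (Fvec n))) ≤ L * (ent p + ent q) ∧
      ent (push V.mkQ p) + ent (push V.mkQ q) ≤ (1 - c) * (ent p + ent q)

/-- Statement `B(η, ε, L)` from the paper. -/
def StB (η ε L : ℝ) : Prop :=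
  ∀ (n : ℕ) (p q : Fvec n → ℝ), IsDist p → IsDist q →
    ∃ V : Submodule (ZMod 2) (Fvec n),
      ent (unifOn (V : Set (Fvec n))) ≤ L * (ent p + ent q) ∧
      ent (conv (push V.mkQ p) (push V.mkQ q)) ≥
        (1 - η) * (ent (push V.mkQ p) + ent (push V.mkQ q)) - ε * (ent p + ent q)


section AuxEntropy

open Finset Real
open scoped Classical

variable {A B C I : Type*}

lemma push_eq_sum [Fintype A] (f : A → B) (p : A → ℝ) (b : B) :
    push f p b = ∑ a, if f a = b then p a else 0 := by
  classical
  rw [push, show f ⁻¹' {b} = ↑(Finset.univ.filter fun a => f a = b) by ext a; simp,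
    finsum_mem_coe_finset, Finset.sum_filter]

lemma ent_eq_sum [Fintype A] (p : A → ℝ) : ent p = ∑ a, Real.negMulLog (p a) :=
  finsum_eq_sum_of_fintype _

lemma condEnt_eq_sum [Fintype B] (r : A × B → ℝ) :
    condEnt r = ∑ b, push Prod.snd r b * ent (fiber r b) :=
  finsum_eq_sum_of_fintype _

lemma sum_push [Fintype A] [Fintype B] (f : A → B) (p : A → ℝ) :
    ∑ b, push f p b = ∑ a, p a := by
  classical
  simp only [push_eq_sum]
  rw [Finset.sum_comm]
  apply Finset.sum_congr rfl
  intro a _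
  rw [Finset.sum_ite_eq univ (f a) (fun _ => p a)]
  simp

lemma push_nonneg [Fintype A] (f : A → B) (p : A → ℝ) (hp : ∀ a, 0 ≤ p a) (b : B) :
    0 ≤ push f p b := by
  classical
  rw [push_eq_sum]
  apply Finset.sum_nonneg
  intro a _
  split_ifs <;> simp [hp a]

lemma push_comp [Fintype A] [Fintype B] (f : A → B) (g : B → C) (p : A → ℝ) :
    push (fun a => g (f a)) p = push g (push f p) := by
  classical
  funext c
  simp only [push_eq_sum]
  have h : ∀ b, (if g b = c then ∑ a, if f a = b then p a else 0 else 0)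
      = ∑ a, if f a = b then (if g b = c then p a else 0) else 0 := by
    intro b
    split_ifs with h
    · simp [h]
    · simp [h]
  simp_rw [h]
  rw [Finset.sum_comm]
  apply Finset.sum_congr rfl
  intro a _
  simp

lemma push_id [Fintype A] (p : A → ℝ) : push (fun a => a) p = p := by
  classical
  funext a
  rw [push_eq_sum]
  simp

lemma ent_push_injective [Fintype A] [Fintype B] (f : A → B) (hf : Function.Injective f)
    (p : A → ℝ) : ent (push f p) = ent p := by
  classical
  rw [ent_eq_sum, ent_eq_sum]
  have h1 : ∀ a, push f p (f a) = p a := by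
    intro a
    rw [push_eq_sum, Finset.sum_eq_single a (fun x _ hx => by
      rw [if_neg]; exact fun h => hx (hf h)) (by simp)]
    simp
  have h2 : ∀ b ∈ Finset.univ, b ∉ Finset.univ.image f → Real.negMulLog (push f p b) = 0 := by
    intro b _ hb
    have : push f p b = 0 := by
      rw [push_eq_sum]
      apply Finset.sum_eq_zero
      intro a _
      rw [if_neg]
      exact fun h => hb (Finset.mem_image.2 ⟨a, Finset.mem_univ a, h⟩)
    simp [this]
  rw [← Finset.sum_subset (Finset.subset_univ (Finset.univ.image f)) h2,
    Finset.sum_image (fun x _ y _ h => hf h)]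
  simp_rw [h1]

lemma push_snd_eq [Fintype A] [Fintype B] (r : A × B → ℝ) (b : B) :
    push Prod.snd r b = ∑ a, r (a, b) := by
  classical
  rw [push_eq_sum, Fintype.sum_prod_type_right]
  simp only []
  rw [Finset.sum_comm]
  apply Finset.sum_congr rfl
  intro a _
  have : ∀ x : B, (if Prod.snd (a, x) = b then r (a, x) else 0) = if x = b then r (a, x) else 0 :=
    fun x => rfl
  simp_rw [this]
  rw [Finset.sum_ite_eq' univ b (fun x => r (a, x))]
  simp

lemma fiber_nonneg [Fintype A] [Fintype B] (r : A × B → ℝ) (hr : ∀ z, 0 ≤ r z) (b : B) (a : A) :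
    0 ≤ fiber r b a := by
  classical
  have h2 : 0 ≤ push Prod.snd r b := by
    rw [push_eq_sum]
    apply Finset.sum_nonneg
    intro z _
    split_ifs <;> simp [hr z]
  exact div_nonneg (hr _) h2

lemma fiber_sum_one [Fintype A] [Fintype B] (r : A × B → ℝ) (b : B)
    (h : push Prod.snd r b ≠ 0) : ∑ a, fiber r b a = 1 := by
  simp only [fiber]
  rw [← Finset.sum_div, ← push_snd_eq, div_self h]

/-- Chain rule: `H[(X,U)] = H[U] + H[X|U]`. -/
lemma chain_rule [Fintype A] [Fintype B] (r : A × B → ℝ) (hr : ∀ z, 0 ≤ r z) :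
    ent r = ent (push Prod.snd r) + condEnt r := by
  classical
  rw [condEnt_eq_sum, ent_eq_sum, ent_eq_sum, Fintype.sum_prod_type_right,
    ← Finset.sum_add_distrib]
  apply Finset.sum_congr rfl
  intro b _
  have hs' : push Prod.snd r b = ∑ a, r (a, b) := push_snd_eq r b
  by_cases h0 : push Prod.snd r b = 0
  · have hz : ∀ a, r (a, b) = 0 := by
      intro a
      have := (Finset.sum_eq_zero_iff_of_nonneg (fun a _ => hr (a, b))).1 (hs' ▸ h0)
      exact this a (Finset.mem_univ a)
    simp [h0, hz]
  · have hfib : ∀ a, fiber r b a = r (a, b) / push Prod.snd r b := fun a => rfl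
    rw [ent_eq_sum]
    simp_rw [hfib]
    have key : ∀ x : ℝ, Real.negMulLog (x / push Prod.snd r b)
        = (push Prod.snd r b)⁻¹ * Real.negMulLog x
          + x * (push Prod.snd r b)⁻¹ * Real.log (push Prod.snd r b) := by
      intro x
      rw [div_eq_mul_inv, Real.negMulLog_mul]
      simp only [Real.negMulLog, Real.log_inv]
      ring
    simp_rw [key]
    rw [Finset.sum_add_distrib, ← Finset.mul_sum, ← Finset.sum_mul, ← Finset.sum_mul, ← hs']
    simp only [Real.negMulLog]
    field_simp
    ring

/-- Concavity of entropy under finite mixtures. -/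
lemma ent_mixture_ge [Fintype A] [Fintype I] (w : I → ℝ) (μ : I → A → ℝ)
    (hw0 : ∀ i, 0 ≤ w i) (hw1 : ∑ i, w i = 1) (hμ : ∀ i a, 0 ≤ μ i a) :
    ∑ i, w i * ent (μ i) ≤ ent (fun a => ∑ i, w i * μ i a) := by
  rw [ent_eq_sum]
  simp_rw [ent_eq_sum, Finset.mul_sum]
  rw [Finset.sum_comm]
  apply Finset.sum_le_sum
  intro a _
  have := Real.concaveOn_negMulLog.le_map_sum (t := Finset.univ) (w := w)
    (p := fun i => μ i a) (fun i _ => hw0 i) hw1 (fun i _ => hμ i a)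
  simpa [smul_eq_mul] using this

lemma push_proj_eval [Fintype A] [Fintype B] [Fintype C] (r : A × B × C → ℝ) (a : A) (b : B) :
    push (fun z : A × B × C => (z.1, z.2.1)) r (a, b) = ∑ c, r (a, b, c) := by
  classical
  rw [push_eq_sum]
  simp only [Fintype.sum_prod_type, Prod.mk.injEq]
  rw [Finset.sum_eq_single a (fun x _ hx => Finset.sum_eq_zero fun y _ =>
    Finset.sum_eq_zero fun z _ => by simp [hx]) (by simp)]
  rw [Finset.sum_eq_single b (fun y _ hy => Finset.sum_eq_zero fun z _ => by simp [hy])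
    (by simp)]
  simp

/-- Conditioning on more reduces entropy: `H[X | U, V] ≤ H[X | U]`. -/
lemma condEnt_mono [Fintype A] [Fintype B] [Fintype C] (r : A × B × C → ℝ)
    (hr : ∀ z, 0 ≤ r z) :
    condEnt r ≤ condEnt (push (fun z : A × B × C => (z.1, z.2.1)) r) := by
  classical
  set r2 := push (fun z : A × B × C => (z.1, z.2.1)) r with hr2
  have hr2nn : ∀ z, 0 ≤ r2 z := by
    intro z
    exact push_nonneg _ r hr z
  rw [condEnt_eq_sum, condEnt_eq_sum, Fintype.sum_prod_type]
  apply Finset.sum_le_sum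
  intro b _
  have hsplit : push Prod.snd r2 b = ∑ c, push Prod.snd r (b, c) := by
    rw [push_snd_eq]
    simp_rw [hr2, push_snd_eq, push_proj_eval]
    rw [Finset.sum_comm]
  by_cases h0 : push Prod.snd r2 b = 0
  · have hz : ∀ c, push Prod.snd r (b, c) = 0 := by
      intro c
      have hnn : ∀ c, 0 ≤ push Prod.snd r (b, c) :=
        fun c => push_nonneg _ r hr (b, c)
      have := (Finset.sum_eq_zero_iff_of_nonneg (fun c _ => hnn c)).1 (hsplit ▸ h0)
      exact this c (Finset.mem_univ c)
    simp [h0, hz]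
  · have hpos : 0 < push Prod.snd r2 b :=
      lt_of_le_of_ne (push_nonneg _ r2 hr2nn b) (Ne.symm h0)
    have hmix : ∑ c, (push Prod.snd r (b, c) / push Prod.snd r2 b) * ent (fiber r (b, c))
        ≤ ent (fiber r2 b) := by
      have hfib : fiber r2 b = fun a =>
          ∑ c, (push Prod.snd r (b, c) / push Prod.snd r2 b) * fiber r (b, c) a := by
        funext a
        have key : ∀ c, (push Prod.snd r (b, c) / push Prod.snd r2 b) * fiber r (b, c) a
            = r (a, b, c) / push Prod.snd r2 b := by
          intro c
          by_cases hc : push Prod.snd r (b, c) = 0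
          · have : r (a, b, c) = 0 := by
              have := (Finset.sum_eq_zero_iff_of_nonneg
                (fun a _ => hr (a, b, c))).1 ((push_snd_eq r (b, c)) ▸ hc)
              exact this a (Finset.mem_univ a)
            simp [hc, fiber, this]
          · simp only [fiber]
            field_simp
        simp_rw [key]
        rw [← Finset.sum_div]
        simp only [fiber, hr2, push_proj_eval]
      rw [hfib]
      apply ent_mixture_ge
      · intro c
        exact div_nonneg (push_nonneg _ r hr _) hpos.le
      · rw [← Finset.sum_div, ← hsplit, div_self h0]
      · intro c a
        exact fiber_nonneg r hr _ a
    calc ∑ c, push Prod.snd r (b, c) * ent (fiber r (b, c))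
        = push Prod.snd r2 b * ∑ c, (push Prod.snd r (b, c) / push Prod.snd r2 b)
            * ent (fiber r (b, c)) := by
          rw [Finset.mul_sum]
          apply Finset.sum_congr rfl
          intro c _
          field_simp
      _ ≤ push Prod.snd r2 b * ent (fiber r2 b) := by
          apply mul_le_mul_of_nonneg_left hmix hpos.le

lemma sum_prodDist [Fintype A] [Fintype B] (p : A → ℝ) (q : B → ℝ) :
    ∑ z, prodDist p q z = (∑ a, p a) * (∑ b, q b) := by
  rw [Finset.sum_mul_sum]
  rw [Fintype.sum_prod_type]
  rfl

lemma ent_prodDist [Fintype A] [Fintype B] (p : A → ℝ) (q : B → ℝ)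
    (hp1 : ∑ a, p a = 1) (hq1 : ∑ b, q b = 1) :
    ent (prodDist p q) = ent p + ent q := by
  rw [ent_eq_sum, ent_eq_sum, ent_eq_sum, Fintype.sum_prod_type]
  have h : ∀ a b, Real.negMulLog (prodDist p q (a, b))
      = q b * Real.negMulLog (p a) + p a * Real.negMulLog (q b) := by
    intro a b
    exact Real.negMulLog_mul (p a) (q b)
  simp_rw [h]
  have h2 : ∀ a, ∑ b, (q b * Real.negMulLog (p a) + p a * Real.negMulLog (q b))
      = Real.negMulLog (p a) + p a * (∑ b, Real.negMulLog (q b)) := by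
    intro a
    rw [Finset.sum_add_distrib, ← Finset.sum_mul, hq1, one_mul, ← Finset.mul_sum]
  simp_rw [h2]
  rw [Finset.sum_add_distrib, ← Finset.sum_mul, hp1, one_mul]

lemma push_prodMap [Fintype A] [Fintype B] [Fintype C] {D : Type*} [Fintype D]
    (f : A → B) (g : C → D) (p : A → ℝ) (q : C → ℝ) :
    push (fun z : A × C => (f z.1, g z.2)) (prodDist p q)
      = prodDist (push f p) (push g q) := by
  classical
  funext z
  obtain ⟨b, d⟩ := z
  simp only [push_eq_sum, prodDist, Fintype.sum_prod_type, Prod.mk.injEq]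
  rw [Finset.sum_mul_sum]
  apply Finset.sum_congr rfl
  intro a _
  apply Finset.sum_congr rfl
  intro c _
  by_cases h1 : f a = b <;> by_cases h2 : g c = d <;> simp [h1, h2]

lemma conv_eq_push {G : Type*} [Fintype G] [AddCommGroup G] (p q : G → ℝ) :
    conv p q = push (fun z : G × G => z.1 + z.2) (prodDist p q) := by
  classical
  funext z
  rw [conv, finsum_eq_sum_of_fintype, push_eq_sum]
  simp only [Fintype.sum_prod_type, prodDist]
  apply Finset.sum_congr rfl
  intro x _
  have h : ∀ y : G, (x + y = z) ↔ (y = z - x) := by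
    intro y
    constructor
    · intro h; rw [← h]; abel
    · intro h; rw [h]; abel
  simp_rw [h]
  rw [Finset.sum_ite_eq' univ (z - x) (fun y => p x * q y)]
  simp

lemma ent_conv_ge_right {G : Type*} [Fintype G] [AddCommGroup G] (p q : G → ℝ)
    (hp0 : ∀ a, 0 ≤ p a) (hp1 : ∑ a, p a = 1) (hq0 : ∀ a, 0 ≤ q a) :
    ent q ≤ ent (conv p q) := by
  classical
  have htrans : ∀ x : G, push (fun y => y + x) q = fun z => q (z - x) := by
    intro x
    funext z
    rw [push_eq_sum]
    have h : ∀ y : G, (y + x = z) ↔ (y = z - x) := by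
      intro y
      constructor
      · intro h; rw [← h]; abel
      · intro h; rw [h]; abel
    simp_rw [h]
    rw [Finset.sum_ite_eq' univ (z - x) (fun y => q y)]
    simp
  have hconv : conv p q = fun z => ∑ x, p x * push (fun y => y + x) q z := by
    funext z
    rw [conv, finsum_eq_sum_of_fintype]
    apply Finset.sum_congr rfl
    intro x _
    rw [htrans x]
  have hentt : ∀ x : G, ent (push (fun y => y + x) q) = ent q := by
    intro x
    exact ent_push_injective _ (fun u v huv => by
      have := congrArg (fun t => t - x) huv
      simpa using this) q
  have := ent_mixture_ge p (fun x => push (fun y => y + x) q) hp0 hp1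
    (fun x a => push_nonneg _ q hq0 a)
  rw [hconv]
  calc ent q = ∑ x, p x * ent (push (fun y => y + x) q) := by
        simp_rw [hentt, ← Finset.sum_mul, hp1, one_mul]
    _ ≤ _ := this

/-- The key inequality: `H[X+Y] ≥ H[X | f(X)] + H[f(Y)]` for a homomorphism `f`. -/
lemma star_ineq {G H : Type*} [Fintype G] [Fintype H] [AddCommGroup G] [AddCommGroup H]
    (f : G → H) (hf : ∀ x y, f (x + y) = f x + f y)
    (μ ν : G → ℝ) (hμ0 : ∀ a, 0 ≤ μ a) (hν0 : ∀ a, 0 ≤ ν a)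
    (hμ1 : ∑ a, μ a = 1) (hν1 : ∑ a, ν a = 1) :
    ent μ - ent (push f μ) + ent (push f ν) ≤ ent (conv μ ν) := by
  classical
  have hT0 : ∀ z : G × G, 0 ≤ prodDist μ ν z := fun z => mul_nonneg (hμ0 z.1) (hν0 z.2)
  set R := push (fun z : G × G => (z.1 + z.2, f z.1 + f z.2)) (prodDist μ ν) with hR
  set R3 := push (fun z : G × G => (z.1 + z.2, f z.1 + f z.2, (f z.1, z.2))) (prodDist μ ν)
    with hR3
  have hR0 : ∀ z, 0 ≤ R z := fun z => push_nonneg _ _ hT0 z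
  have hR30 : ∀ z, 0 ≤ R3 z := fun z => push_nonneg _ _ hT0 z
  -- ent C = ent R
  have e1 : ent (conv μ ν) = ent R := by
    have hcomp : push (fun a : G × G => (a.1 + a.2, f (a.1 + a.2))) (prodDist μ ν)
        = push (fun z : G => (z, f z)) (push (fun a : G × G => a.1 + a.2) (prodDist μ ν)) :=
      push_comp (fun a : G × G => a.1 + a.2) (fun z : G => (z, f z)) (prodDist μ ν)
    have hfun : (fun a : G × G => (a.1 + a.2, f (a.1 + a.2)))
        = (fun z : G × G => (z.1 + z.2, f z.1 + f z.2)) := by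
      funext a
      rw [hf]
    rw [hfun] at hcomp
    rw [hR, hcomp, ← conv_eq_push,
      ent_push_injective _ (fun u v huv => congrArg Prod.fst huv) _]
  -- push snd R = conv (push f μ) (push f ν)
  have e2 : push Prod.snd R = conv (push f μ) (push f ν) := by
    have hcomp : push (fun z : G × G => f z.1 + f z.2) (prodDist μ ν)
        = push Prod.snd (push (fun z : G × G => (z.1 + z.2, f z.1 + f z.2)) (prodDist μ ν)) :=
      push_comp (fun z : G × G => (z.1 + z.2, f z.1 + f z.2)) Prod.snd (prodDist μ ν)
    have hcomp2 : push (fun z : G × G => f z.1 + f z.2) (prodDist μ ν)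
        = push (fun w : H × H => w.1 + w.2)
            (push (fun z : G × G => (f z.1, f z.2)) (prodDist μ ν)) :=
      push_comp (fun z : G × G => (f z.1, f z.2)) (fun w : H × H => w.1 + w.2) (prodDist μ ν)
    rw [hR, ← hcomp, hcomp2, push_prodMap, ← conv_eq_push]
  have e3 : ent (push f ν) ≤ ent (push Prod.snd R) := by
    rw [e2]
    apply ent_conv_ge_right
    · exact fun a => push_nonneg _ μ hμ0 a
    · rw [sum_push]; exact hμ1
    · exact fun a => push_nonneg _ ν hν0 a
  have e4 : ent R = ent (push Prod.snd R) + condEnt R := chain_rule R hR0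
  have e5 : push (fun z : G × H × (H × G) => (z.1, z.2.1)) R3 = R := by
    rw [hR3, hR]
    exact (push_comp (fun z : G × G => (z.1 + z.2, f z.1 + f z.2, (f z.1, z.2)))
      (fun z : G × H × (H × G) => (z.1, z.2.1)) (prodDist μ ν)).symm
  have e6 : condEnt R3 ≤ condEnt R := by
    have := condEnt_mono R3 hR30
    rwa [e5] at this
  have e7 : ent R3 = ent μ + ent ν := by
    rw [hR3, ent_push_injective _ ?_ _, ent_prodDist μ ν hμ1 hν1]
    intro u v huv
    simp only [Prod.mk.injEq] at huv
    obtain ⟨h1, _, _, h4⟩ := huv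
    have hx : u.1 = v.1 := by
      have : u.1 + u.2 - u.2 = v.1 + v.2 - v.2 := by rw [h1, h4]
      simpa using this
    exact Prod.ext hx h4
  have e8 : ent (push Prod.snd R3) = ent (push f μ) + ent ν := by
    have h1 : push (fun z : G × G => (f z.1 + f z.2, (f z.1, z.2))) (prodDist μ ν)
        = push Prod.snd R3 := by
      rw [hR3]
      exact push_comp (fun z : G × G => (z.1 + z.2, f z.1 + f z.2, (f z.1, z.2)))
        Prod.snd (prodDist μ ν)
    have h3 : push (fun z : G × G => (f z.1 + f z.2, (f z.1, z.2))) (prodDist μ ν)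
        = push (fun w : H × G => (w.1 + f w.2, (w.1, w.2)))
            (push (fun z : G × G => (f z.1, z.2)) (prodDist μ ν)) :=
      push_comp (fun z : G × G => (f z.1, z.2))
        (fun w : H × G => (w.1 + f w.2, (w.1, w.2))) (prodDist μ ν)
    have h4 : push (fun z : G × G => (f z.1, z.2)) (prodDist μ ν)
        = prodDist (push f μ) ν := by
      have h := push_prodMap f (fun c : G => c) μ ν
      rw [push_id] at h
      exact h
    rw [← h1, h3, h4, ent_push_injective _ ?_ _,
      ent_prodDist _ _ (by rw [sum_push]; exact hμ1) hν1]
    intro u v huv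
    simp only [Prod.mk.injEq] at huv
    exact Prod.ext huv.2.1 huv.2.2
  have e9 : ent R3 = ent (push Prod.snd R3) + condEnt R3 := chain_rule R3 hR30
  have ekey : condEnt R3 = ent μ - ent (push f μ) := by
    rw [e7, e8] at e9
    linarith
  rw [e1, e4]
  linarith

lemma push_pair_eval [Fintype A] (g : A → C) (p : A → ℝ) (a : A) (u : C) :
    push (fun x => (x, g x)) p (a, u) = if g a = u then p a else 0 := by
  classical
  rw [push_eq_sum]
  simp only [Prod.mk.injEq]
  rw [Finset.sum_eq_single a (fun x _ hx => by simp [hx]) (by simp)]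
  by_cases h : g a = u <;> simp [h]

lemma pair_eval [Fintype A] (f : A → B) (g : A → C) (p : A → ℝ) (t : B) (u : C) :
    push (fun x => (f x, g x)) p (t, u) = ∑ a, if f a = t ∧ g a = u then p a else 0 := by
  classical
  rw [push_eq_sum]
  simp [Prod.mk.injEq]

/-- `𝔼_u H[f(X) | g(X) = u] = H[f(X) | g(X)]`. -/
lemma LA [Fintype A] [Fintype B] [Fintype C] (p : A → ℝ) (f : A → B) (g : A → C) :
    ∑ u, push Prod.snd (push (fun x => (x, g x)) p) u *
        ent (push f (fiber (push (fun x => (x, g x)) p) u)) =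
      condEnt (push (fun x => (f x, g x)) p) := by
  classical
  have hw1 : push Prod.snd (push (fun x => (x, g x)) p) = push g p :=
    (push_comp (fun x => (x, g x)) Prod.snd p).symm
  have hw2 : push Prod.snd (push (fun x => (f x, g x)) p) = push g p :=
    (push_comp (fun x => (f x, g x)) Prod.snd p).symm
  have hfib : ∀ u, push f (fiber (push (fun x => (x, g x)) p) u)
      = fiber (push (fun x => (f x, g x)) p) u := by
    intro u
    funext t
    rw [push_eq_sum]
    have h1 : ∀ a, fiber (push (fun x => (x, g x)) p) u a
        = (if g a = u then p a else 0) / push g p u := by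
      intro a
      show push (fun x => (x, g x)) p (a, u) / push Prod.snd (push (fun x => (x, g x)) p) u
          = _
      rw [push_pair_eval, hw1]
    simp_rw [h1]
    have h2 : fiber (push (fun x => (f x, g x)) p) u t
        = (∑ a, if f a = t ∧ g a = u then p a else 0) / push g p u := by
      show push (fun x => (f x, g x)) p (t, u) / push Prod.snd (push (fun x => (f x, g x)) p) u
          = _
      rw [pair_eval, hw2]
    rw [h2, Finset.sum_div]
    apply Finset.sum_congr rfl
    intro a _
    by_cases hft : f a = t <;> by_cases hgu : g a = u <;> simp [hft, hgu]
  rw [condEnt_eq_sum]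
  apply Finset.sum_congr rfl
  intro u _
  rw [hfib, hw1, hw2]

end AuxEntropy

/-- For independent `X ∼ p`, `Y ∼ q` and subspaces `W ⊆ V`,
`H[Y | π_W(Y)] ≥ s[X | π_V(X); Y | π_V(Y)] − H[π_W(X) | π_V(X)]`. -/
theorem statement16 (n : ℕ) (p q : Fvec n → ℝ) (hp : IsDist p) (hq : IsDist q)
    (W V : Submodule (ZMod 2) (Fvec n)) (hWV : W ≤ V) :
    condEnt (selfProj W q) ≥
      sCond (selfProj V p) (selfProj V q) -
        condEnt (push (fun x => (W.mkQ x, V.mkQ x)) p) := by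
  classical
  obtain ⟨hp0, hp1⟩ := hp
  obtain ⟨hq0, hq1⟩ := hq
  haveI : Fintype (Fvec n ⧸ V) := Fintype.ofFinite _
  haveI : Fintype (Fvec n ⧸ W) := Fintype.ofFinite _
  rw [finsum_eq_sum_of_fintype] at hp1 hq1
  set fW : Fvec n → Fvec n ⧸ W := fun x => W.mkQ x with hfW
  set fV : Fvec n → Fvec n ⧸ V := fun x => V.mkQ x with hfV
  have hfWadd : ∀ x y, fW (x + y) = fW x + fW y := by
    intro x y
    simp [hfW, map_add]
  have hr1nn : ∀ z, 0 ≤ selfProj V p z := push_nonneg (fun x => (x, fV x)) p hp0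
  have hr2nn : ∀ z, 0 ≤ selfProj V q z := push_nonneg (fun x => (x, fV x)) q hq0
  set P := push Prod.snd (selfProj V p) with hP
  set Q := push Prod.snd (selfProj V q) with hQ
  have hP0 : ∀ u, 0 ≤ P u := push_nonneg _ _ hr1nn
  have hQ0 : ∀ w, 0 ≤ Q w := push_nonneg _ _ hr2nn
  have hPsum : ∑ u, P u = 1 := by
    have h1 : ∑ u, P u = ∑ z, selfProj V p z := sum_push _ _
    have h2 : ∑ z, selfProj V p z = ∑ x, p x := sum_push (fun x => (x, fV x)) p
    rw [h1, h2, hp1]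
  have hQsum : ∑ w, Q w = 1 := by
    have h1 : ∑ w, Q w = ∑ z, selfProj V q z := sum_push _ _
    have h2 : ∑ z, selfProj V q z = ∑ x, q x := sum_push (fun x => (x, fV x)) q
    rw [h1, h2, hq1]
  have hsCond : sCond (selfProj V p) (selfProj V q)
      = ∑ u, ∑ w, P u * Q w * sDouble (fiber (selfProj V p) u) (fiber (selfProj V q) w) := by
    rw [sCond, finsum_eq_sum_of_fintype]
    exact Finset.sum_congr rfl fun u _ => finsum_eq_sum_of_fintype _
  -- termwise bound
  have hterm : ∀ u w, P u * Q w * sDouble (fiber (selfProj V p) u) (fiber (selfProj V q) w)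
      ≤ P u * Q w * (ent (push fW (fiber (selfProj V p) u))
          + (ent (fiber (selfProj V q) w) - ent (push fW (fiber (selfProj V q) w)))) := by
    intro u w
    by_cases hu : P u = 0
    · simp [hu]
    by_cases hw : Q w = 0
    · simp [hw]
    apply mul_le_mul_of_nonneg_left _ (mul_nonneg (hP0 u) (hQ0 w))
    have hstar := star_ineq fW hfWadd (fiber (selfProj V p) u) (fiber (selfProj V q) w)
      (fiber_nonneg _ hr1nn u) (fiber_nonneg _ hr2nn w)
      (fiber_sum_one _ u hu) (fiber_sum_one _ w hw)
    have hsd : sDouble (fiber (selfProj V p) u) (fiber (selfProj V q) w)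
        = ent (fiber (selfProj V p) u) + ent (fiber (selfProj V q) w)
          - ent (conv (fiber (selfProj V p) u) (fiber (selfProj V q) w)) := rfl
    rw [hsd]
    linarith
  have hsum := Finset.sum_le_sum (s := (Finset.univ : Finset (Fvec n ⧸ V)))
    (fun u _ => Finset.sum_le_sum (s := (Finset.univ : Finset (Fvec n ⧸ V)))
      (fun w _ => hterm u w))
  -- split the right-hand side
  have hsplit : ∀ (aa bb : (Fvec n ⧸ V) → ℝ),
      (∑ u, ∑ w, P u * Q w * (aa u + bb w)) = (∑ u, P u * aa u) + (∑ w, Q w * bb w) := by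
    intro aa bb
    have h1 : ∀ u, ∑ w, P u * Q w * (aa u + bb w)
        = P u * aa u + P u * (∑ w, Q w * bb w) := by
      intro u
      have h2 : ∀ w, P u * Q w * (aa u + bb w) = Q w * (P u * aa u) + P u * (Q w * bb w) := by
        intro w; ring
      simp_rw [h2]
      rw [Finset.sum_add_distrib, ← Finset.sum_mul, hQsum, one_mul, ← Finset.mul_sum]
    simp_rw [h1]
    rw [Finset.sum_add_distrib, ← Finset.sum_mul, hPsum, one_mul]
  -- Claim A
  have claimA : (∑ u, P u * ent (push fW (fiber (selfProj V p) u)))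
      = condEnt (push (fun x => (W.mkQ x, V.mkQ x)) p) := LA p fW fV
  -- Claim B pieces
  have hQent : ∑ w, Q w * ent (fiber (selfProj V q) w) = ent q - ent (push fV q) := by
    have hchain := chain_rule (selfProj V q) hr2nn
    have hent1 : ent (selfProj V q) = ent q :=
      ent_push_injective (fun x => (x, fV x)) (fun u v huv => congrArg Prod.fst huv) q
    have hsnd : push Prod.snd (selfProj V q) = push fV q :=
      (push_comp (fun x => (x, fV x)) Prod.snd q).symm
    have hce : condEnt (selfProj V q) = ∑ w, Q w * ent (fiber (selfProj V q) w) :=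
      condEnt_eq_sum _
    rw [hent1, hsnd, hce] at hchain
    linarith
  have hSB2 : (∑ w, Q w * ent (push fW (fiber (selfProj V q) w)))
      = condEnt (push (fun x => (W.mkQ x, V.mkQ x)) q) := LA q fW fV
  -- factoring through W
  have hfactor : ∀ r : Fvec n → ℝ,
      ent (push (fun x => (W.mkQ x, V.mkQ x)) r) = ent (push fW r) := by
    intro r
    set φ : (Fvec n ⧸ W) →ₗ[ZMod 2] (Fvec n ⧸ V) :=
      Submodule.mapQ W V LinearMap.id (by simpa using hWV) with hφ
    have hcomp : push (fun t : Fvec n ⧸ W => (t, φ t)) (push fW r)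
        = push (fun x => ((fW x : Fvec n ⧸ W), φ (fW x))) r :=
      (push_comp fW (fun t : Fvec n ⧸ W => (t, φ t)) r).symm
    have hfun : (fun x => ((fW x : Fvec n ⧸ W), φ (fW x)))
        = fun x => ((W.mkQ x : Fvec n ⧸ W), (V.mkQ x : Fvec n ⧸ V)) := by
      funext x
      simp [hφ, hfW, Submodule.mapQ_apply, Submodule.mkQ_apply]
    rw [← hfun, ← hcomp,
      ent_push_injective _ (fun u v huv => congrArg Prod.fst huv) (push fW r)]
  have hpairq : condEnt (push (fun x => (W.mkQ x, V.mkQ x)) q)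
      = ent (push fW q) - ent (push fV q) := by
    have hnn : ∀ z, 0 ≤ push (fun x => (W.mkQ x, V.mkQ x)) q z := push_nonneg _ q hq0
    have hchain := chain_rule (push (fun x => (W.mkQ x, V.mkQ x)) q) hnn
    have hsnd : push Prod.snd (push (fun x => (W.mkQ x, V.mkQ x)) q) = push fV q :=
      (push_comp (fun x => ((W.mkQ x : Fvec n ⧸ W), (V.mkQ x : Fvec n ⧸ V))) Prod.snd q).symm
    rw [hsnd, hfactor q] at hchain
    linarith
  have hWq : condEnt (selfProj W q) = ent q - ent (push fW q) := by
    have hnn : ∀ z, 0 ≤ selfProj W q z := push_nonneg (fun x => (x, fW x)) q hq0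
    have hchain := chain_rule (selfProj W q) hnn
    have hent1 : ent (selfProj W q) = ent q :=
      ent_push_injective (fun x => (x, fW x)) (fun u v huv => congrArg Prod.fst huv) q
    have hsnd : push Prod.snd (selfProj W q) = push fW q :=
      (push_comp (fun x => (x, fW x)) Prod.snd q).symm
    rw [hent1, hsnd] at hchain
    linarith
  have hBsplit : (∑ w, Q w * (ent (fiber (selfProj V q) w)
        - ent (push fW (fiber (selfProj V q) w))))
      = (∑ w, Q w * ent (fiber (selfProj V q) w))
        - (∑ w, Q w * ent (push fW (fiber (selfProj V q) w))) := by
    simp_rw [mul_sub]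
    rw [Finset.sum_sub_distrib]
  have hkey : sCond (selfProj V p) (selfProj V q)
      ≤ condEnt (push (fun x => (W.mkQ x, V.mkQ x)) p) + condEnt (selfProj W q) := by
    rw [hsCond]
    refine le_trans hsum ?_
    rw [hsplit (fun u => ent (push fW (fiber (selfProj V p) u)))
      (fun w => ent (fiber (selfProj V q) w) - ent (push fW (fiber (selfProj V q) w)))]
    rw [claimA, hBsplit, hQent, hSB2, hpairq, hWq]
    linarith
  linarith
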